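/- Let S ≥ 1, let Q be an S×S row-stochastic real matrix, α ∈ (0,1), let c ∈ ℝ^S be nonnegative with ‖c‖_∞ > 0, let v = (1−α)(I − αQ)^{-1} c, and let ε ∈ (0, 4‖c‖_∞) and δ ∈ (0,1). On a probability space, for each state s let Y_{s,1}, …, Y_{s,n} be i.i.d. Fin S-valued random variables with ℙ(Y_{s,i} = s') = Q(s,s'), independent across different s. Define the empirical matrix Q̃ by Q̃(s,s') = (1/n) Σ_{i=1}^n 1(Y_{s,i} = s'), and let ṽ = (1−α)(I − αQ̃)^{-1} c. If n ≥ (2 ‖c‖_∞^2 α^2 / (ε^2 (1−α)^2)) · log( (2S/δ) · ⌈log(4‖c‖_∞/ε)/(1−α)⌉ ), then ℙ( ‖ṽ − v‖_∞ ≥ ε ) ≤ δ. -/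

import Mathlib

/-!
For every row-stochastic `P` and `0 ≤ α`, the matrix `I - αP` expands the sup norm by at least the
factor `1 - α`. The plug-in error satisfies `(I - αQ̃)(ṽ - v) = α (Q̃ - Q) v`, so `‖ṽ - v‖ ≥ ε`
forces a state `s` with `|((Q̃ - Q) v)(s)| ≥ ε (1 - α) / α`. That coordinate is the deviation of
the empirical mean of the independent variables `v (Y s i)`, which lie in `[-‖c‖, ‖c‖]` by the
same expansion bound, from its expectation `(Q v)(s)`; so Hoeffding's inequality and a union bound over the `S` states bound the probability
by `2 S exp (-n ε² (1 - α)² / (2 α² ‖c‖²))`, which the sample size makes at most `δ`.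
-/

open MeasureTheory ProbabilityTheory Finset Matrix Real
open scoped NNReal

namespace Matrix

section Discounted

variable {m : Type*} [Fintype m] [DecidableEq m] {P P' : Matrix m m ℝ} {α : ℝ}
  {c w w' : m → ℝ}

lemma norm_mulVec_le_of_mem_rowStochastic (hP : P ∈ rowStochastic ℝ m) (x : m → ℝ) :
    ‖P *ᵥ x‖ ≤ ‖x‖ := by
  refine (pi_norm_le_iff_of_nonneg (norm_nonneg x)).2 fun i => ?_
  calc ‖(P *ᵥ x) i‖ ≤ ∑ j, P i j * ‖x j‖ := by
        refine (norm_sum_le _ _).trans_eq (sum_congr rfl fun j _ => ?_)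
        rw [norm_mul, Real.norm_of_nonneg (nonneg_of_mem_rowStochastic hP)]
    _ ≤ ∑ j, P i j * ‖x‖ := by
        gcongr with j
        · exact nonneg_of_mem_rowStochastic hP
        · exact norm_le_pi_norm x j
    _ = ‖x‖ := by rw [← sum_mul, sum_row_of_mem_rowStochastic hP, one_mul]

lemma one_sub_mul_norm_le_norm_one_sub_smul_mulVec (hP : P ∈ rowStochastic ℝ m) (hα : 0 ≤ α)
    (x : m → ℝ) : (1 - α) * ‖x‖ ≤ ‖(1 - α • P) *ᵥ x‖ := by
  have hx : x = (1 - α • P) *ᵥ x + α • (P *ᵥ x) := by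
    rw [sub_mulVec, one_mulVec, smul_mulVec, sub_add_cancel]
  have := calc ‖x‖ = ‖(1 - α • P) *ᵥ x + α • (P *ᵥ x)‖ := congrArg norm hx
    _ ≤ ‖(1 - α • P) *ᵥ x‖ + ‖α • (P *ᵥ x)‖ := norm_add_le _ _
    _ ≤ ‖(1 - α • P) *ᵥ x‖ + α * ‖x‖ := by
        rw [norm_smul, Real.norm_of_nonneg hα]
        gcongr
        exact norm_mulVec_le_of_mem_rowStochastic hP x
  linarith

lemma isUnit_one_sub_smul_of_mem_rowStochastic (hP : P ∈ rowStochastic ℝ m) (hα0 : 0 ≤ α)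
    (hα1 : α < 1) : IsUnit (1 - α • P) := by
  rw [isUnit_iff_isUnit_det, isUnit_iff_ne_zero]
  intro hdet
  obtain ⟨x, hx0, hx⟩ := exists_mulVec_eq_zero_iff.2 hdet
  have := one_sub_mul_norm_le_norm_one_sub_smul_mulVec hP hα0 x
  rw [hx, norm_zero] at this
  exact hx0 (norm_le_zero_iff.1 (nonpos_of_mul_nonpos_right this (by linarith)))

lemma one_sub_smul_mulVec_eq_of_eq_inv_mulVec (hP : P ∈ rowStochastic ℝ m) (hα0 : 0 ≤ α)
    (hα1 : α < 1) (hw : w = (1 - α) • (1 - α • P)⁻¹ *ᵥ c) :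
    (1 - α • P) *ᵥ w = (1 - α) • c := by
  rw [hw, mulVec_smul, mulVec_mulVec, mul_nonsing_inv _
    ((isUnit_iff_isUnit_det _).1 (isUnit_one_sub_smul_of_mem_rowStochastic hP hα0 hα1)),
    one_mulVec]

lemma norm_le_of_one_sub_smul_mulVec_eq (hP : P ∈ rowStochastic ℝ m) (hα0 : 0 ≤ α)
    (hα1 : α < 1) (hw : (1 - α • P) *ᵥ w = (1 - α) • c) : ‖w‖ ≤ ‖c‖ := by
  have := one_sub_mul_norm_le_norm_one_sub_smul_mulVec hP hα0 w
  rw [hw, norm_smul, Real.norm_of_nonneg (by linarith)] at this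
  exact le_of_mul_le_mul_left this (by linarith)

lemma one_sub_mul_norm_sub_le_mul_norm_sub_mulVec (hP' : P' ∈ rowStochastic ℝ m)
    (hα : 0 ≤ α) (hw : (1 - α • P) *ᵥ w = (1 - α) • c)
    (hw' : (1 - α • P') *ᵥ w' = (1 - α) • c) :
    (1 - α) * ‖w' - w‖ ≤ α * ‖(P' - P) *ᵥ w‖ := by
  have herr : (1 - α • P') *ᵥ (w' - w) = α • ((P' - P) *ᵥ w) := by
    rw [mulVec_sub, hw', ← hw, ← sub_mulVec, ← smul_mulVec, smul_sub]
    congr 1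
    abel
  have := one_sub_mul_norm_le_norm_one_sub_smul_mulVec hP' hα (w' - w)
  rwa [herr, norm_smul, Real.norm_of_nonneg hα] at this

end Discounted

section Empirical

variable {m ι : Type*} [Fintype m] [DecidableEq m] [Fintype ι]

noncomputable def empiricalMatrix (y : m → ι → m) : Matrix m m ℝ :=
  of fun s s' => (∑ i, if y s i = s' then (1 : ℝ) else 0) / Fintype.card ι

lemma empiricalMatrix_mulVec (y : m → ι → m) (w : m → ℝ) (s : m) :
    (empiricalMatrix y *ᵥ w) s = (∑ i, w (y s i)) / Fintype.card ι := by
  simp only [empiricalMatrix, mulVec, dotProduct, of_apply, div_mul_eq_mul_div, ← sum_div,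
    sum_mul, ite_mul, one_mul, zero_mul]
  rw [sum_comm]
  simp

lemma empiricalMatrix_mem_rowStochastic [Nonempty ι] (y : m → ι → m) :
    empiricalMatrix y ∈ rowStochastic ℝ m := by
  refine mem_rowStochastic.2 ⟨fun s s' => ?_, ?_⟩
  · exact div_nonneg (sum_nonneg fun i _ => by split_ifs <;> norm_num) (Nat.cast_nonneg _)
  · ext s
    simp [empiricalMatrix_mulVec]

lemma exists_le_abs_sum_sub_of_le_norm_sub [Nonempty ι] {Q : Matrix m m ℝ}
    {y : m → ι → m} {α : ℝ} (hα0 : 0 < α) (hα1 : α < 1)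
    {c w w' : m → ℝ} (hw : (1 - α • Q) *ᵥ w = (1 - α) • c)
    (hw' : (1 - α • empiricalMatrix y) *ᵥ w' = (1 - α) • c) {ε : ℝ} (hε : 0 < ε)
    (h : ε ≤ ‖w' - w‖) :
    ∃ s, Fintype.card ι * (ε * (1 - α) / α) ≤ |∑ i, (w (y s i) - (Q *ᵥ w) s)| := by
  have hdev : ε * (1 - α) / α ≤ ‖(empiricalMatrix y - Q) *ᵥ w‖ := by
    rw [div_le_iff₀' hα0]
    calc ε * (1 - α) ≤ (1 - α) * ‖w' - w‖ := by rw [mul_comm]; gcongr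
      _ ≤ α * ‖(empiricalMatrix y - Q) *ᵥ w‖ :=
        one_sub_mul_norm_sub_le_mul_norm_sub_mulVec (empiricalMatrix_mem_rowStochastic y)
          hα0.le hw hw'
  obtain ⟨s, hs⟩ : ∃ s, ε * (1 - α) / α ≤ |((empiricalMatrix y - Q) *ᵥ w) s| := by
    by_contra! hlt
    exact hdev.not_gt ((pi_norm_lt_iff (by have := sub_pos.2 hα1; positivity)).2 hlt)
  refine ⟨s, ?_⟩
  have hcard : (0 : ℝ) < Fintype.card ι := by exact_mod_cast Fintype.card_pos
  have hcoord : ((empiricalMatrix y - Q) *ᵥ w) s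
      = (∑ i, (w (y s i) - (Q *ᵥ w) s)) / Fintype.card ι := by
    rw [sub_mulVec, Pi.sub_apply, empiricalMatrix_mulVec, sum_sub_distrib, sum_const, card_univ,
      nsmul_eq_mul]
    field_simp
  rwa [hcoord, abs_div, Nat.abs_cast, le_div_iff₀' hcard] at hs

end Empirical

end Matrix

section Probability

variable {Ω : Type*} [MeasurableSpace Ω] {μ : Measure Ω}

lemma ProbabilityTheory.HasSubgaussianMGF.measureReal_abs_ge_le {X : Ω → ℝ} {c : ℝ≥0}
    (h : HasSubgaussianMGF X c μ) {r : ℝ} (hr : 0 ≤ r) :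
    μ.real {ω | r ≤ |X ω|} ≤ 2 * exp (-r ^ 2 / (2 * c)) := by
  have hsplit : {ω | r ≤ |X ω|} = {ω | r ≤ X ω} ∪ {ω | r ≤ (-X) ω} := by
    ext ω
    simp only [Set.mem_ofPred_eq, Set.mem_union, Pi.neg_apply, le_abs', le_neg, or_comm]
  calc μ.real {ω | r ≤ |X ω|} ≤ μ.real {ω | r ≤ X ω} + μ.real {ω | r ≤ (-X) ω} :=
        hsplit ▸ measureReal_union_le _ _
    _ ≤ exp (-r ^ 2 / (2 * c)) + exp (-r ^ 2 / (2 * c)) :=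
        add_le_add (h.measure_ge_le hr) (h.neg.measure_ge_le hr)
    _ = 2 * exp (-r ^ 2 / (2 * c)) := (two_mul _).symm

lemma ProbabilityTheory.measureReal_abs_sum_sub_integral_ge_le_of_iIndepFun
    [IsProbabilityMeasure μ] {ι : Type*} {X : ι → Ω → ℝ} (hX : iIndepFun X μ)
    (hXm : ∀ i, Measurable (X i)) {a b : ℝ}
    (hab : ∀ i ω, X i ω ∈ Set.Icc a b) (s : Finset ι) {t : ℝ} (ht : 0 ≤ t) :
    μ.real {ω | #s * t ≤ |∑ i ∈ s, (X i ω - μ[X i])|}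
      ≤ 2 * exp (-2 * #s * t ^ 2 / (b - a) ^ 2) := by
  have hsubG :
      ∀ i ∈ s, HasSubgaussianMGF (fun ω => X i ω - μ[X i]) ((‖b - a‖₊ / 2) ^ 2) μ :=
    fun i _ => hasSubgaussianMGF_of_mem_Icc (hXm i).aemeasurable (ae_of_all _ (hab i))
  have hindep : iIndepFun (fun i ω => X i ω - μ[X i]) μ :=
    hX.comp (fun i x => x - ∫ ω, X i ω ∂μ) fun _ => measurable_id.sub_const _
  have := (HasSubgaussianMGF.sum_of_iIndepFun hindep hsubG).measureReal_abs_ge_le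
    (r := #s * t) (by positivity)
  refine this.trans_eq ?_
  congr 2
  push_cast
  rw [sum_const, Real.norm_eq_abs, nsmul_eq_mul, div_pow, sq_abs]
  rcases eq_or_ne (#s : ℝ) 0 with hs | hs
  · simp [hs]
  · field_simp

lemma integral_comp_eq_dotProduct [IsFiniteMeasure μ] {m : Type*} [Fintype m]
    [MeasurableSpace m] [MeasurableSingletonClass m] {Y : Ω → m} (hY : Measurable Y)
    {q : m → ℝ} (hq : ∀ s, 0 ≤ q s) (hYq : ∀ s, μ {ω | Y ω = s} = ENNReal.ofReal (q s))
    (w : m → ℝ) : ∫ ω, w (Y ω) ∂μ = q ⬝ᵥ w := by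
  rw [← integral_map hY.aemeasurable (measurable_of_finite w).aestronglyMeasurable,
    integral_fintype Integrable.of_finite]
  refine sum_congr rfl fun s _ => ?_
  rw [measureReal_def, Measure.map_apply hY (measurableSet_singleton s), smul_eq_mul]
  simp [Set.preimage, hYq, hq]

lemma measureReal_abs_sum_sub_dotProduct_ge_le [IsProbabilityMeasure μ] {m ι : Type*}
    [Fintype m] [MeasurableSpace m] [MeasurableSingletonClass m] [Fintype ι] {Y : ι → Ω → m}
    (hY : iIndepFun Y μ) (hYm : ∀ i, Measurable (Y i)) {q : m → ℝ} (hq : ∀ s, 0 ≤ q s)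
    (hYq : ∀ i s, μ {ω | Y i ω = s} = ENNReal.ofReal (q s)) {w : m → ℝ} {M : ℝ}
    (hw : ‖w‖ ≤ M) {t : ℝ} (ht : 0 ≤ t) :
    μ.real {ω | Fintype.card ι * t ≤ |∑ i, (w (Y i ω) - q ⬝ᵥ w)|}
      ≤ 2 * exp (-(2 * Fintype.card ι * t ^ 2 / (2 * M) ^ 2)) := by
  have hmean : ∀ i, μ[fun ω => w (Y i ω)] = q ⬝ᵥ w := fun i =>
    integral_comp_eq_dotProduct (hYm i) hq (hYq i) w
  have hbound : ∀ i ω, w (Y i ω) ∈ Set.Icc (-M) M := fun i ω =>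
    abs_le.1 ((norm_le_pi_norm w _).trans hw)
  have := measureReal_abs_sum_sub_integral_ge_le_of_iIndepFun
    (hY.comp (fun _ => w) fun _ => measurable_of_finite w)
    (fun i => (measurable_of_finite w).comp (hYm i)) hbound univ ht
  simpa [hmean, neg_div, ← two_mul] using this

end Probability

lemma log_le_of_sample_size {n : ℕ} {a M α ε : ℝ} (ha : 0 < a) (hα0 : 0 < α) (hα1 : α < 1)
    (hε0 : 0 < ε) (hεM : ε < 4 * M)
    (hn : (n : ℝ) ≥ 2 * M ^ 2 * α ^ 2 / (ε ^ 2 * (1 - α) ^ 2)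
      * log (a * (⌈log (4 * M / ε) / (1 - α)⌉₊ : ℝ))) :
    log a ≤ 2 * n * (ε * (1 - α) / α) ^ 2 / (2 * M) ^ 2 := by
  have h1α : 0 < 1 - α := sub_pos.2 hα1
  have hM : 0 < M := by linarith
  have hceil : (1 : ℝ) ≤ ⌈log (4 * M / ε) / (1 - α)⌉₊ := by
    have : 0 < log (4 * M / ε) := log_pos ((one_lt_div hε0).2 hεM)
    exact_mod_cast Nat.one_le_ceil_iff.2 (by positivity)
  set C := 2 * M ^ 2 * α ^ 2 / (ε ^ 2 * (1 - α) ^ 2) with hC_def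
  have hC : 0 < C := by positivity
  have hexponent : 2 * n * (ε * (1 - α) / α) ^ 2 / (2 * M) ^ 2 = n / C := by
    rw [hC_def]
    field_simp
  rw [hexponent, le_div_iff₀ hC]
  calc log a * C ≤ log (a * (⌈log (4 * M / ε) / (1 - α)⌉₊ : ℝ)) * C := by
        gcongr
        exact le_mul_of_one_le_right ha.le hceil
    _ ≤ n := by linarith

theorem backward_epe_plugin_accuracy_general
    (S : ℕ) (hS : 1 ≤ S) (Q : Matrix (Fin S) (Fin S) ℝ)
    (hQnonneg : ∀ i j, 0 ≤ Q i j) (hQrow : ∀ i, ∑ j, Q i j = 1)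
    (α : ℝ) (hα : α ∈ Set.Ioo (0 : ℝ) 1)
    (c : Fin S → ℝ)
    (v : Fin S → ℝ) (hv : v = (1 - α) • ((1 - α • Q)⁻¹).mulVec c)
    (ε δ : ℝ) (hε : ε ∈ Set.Ioo 0 (4 * ‖c‖)) (hδ : δ ∈ Set.Ioo (0 : ℝ) 1)
    (Ω : Type*) [MeasurableSpace Ω] (Pr : Measure Ω) [IsProbabilityMeasure Pr]
    (n : ℕ) (Y : Fin S → Fin n → Ω → Fin S)
    (hYmeas : ∀ s i, Measurable (Y s i))
    (hYdist : ∀ s i s', Pr {ω | Y s i ω = s'} = ENNReal.ofReal (Q s s'))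
    (hYindep : iIndepFun
      (fun p : Fin S × Fin n => Y p.1 p.2) Pr)
    (Qtilde : Ω → Matrix (Fin S) (Fin S) ℝ)
    (hQtilde : ∀ ω s s',
      Qtilde ω s s' = (∑ i, if Y s i ω = s' then (1 : ℝ) else 0) / n)
    (vtilde : Ω → Fin S → ℝ)
    (hvtilde : ∀ ω, vtilde ω = (1 - α) • ((1 - α • Qtilde ω)⁻¹).mulVec c)
    (hn : (n : ℝ) ≥ 2 * ‖c‖ ^ 2 * α ^ 2 / (ε ^ 2 * (1 - α) ^ 2)
      * Real.log ((2 * S / δ)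
          * (⌈Real.log (4 * ‖c‖ / ε) / (1 - α)⌉₊ : ℝ))) :
    Pr {ω | ε ≤ ‖vtilde ω - v‖} ≤ ENNReal.ofReal δ := by
  obtain ⟨hα0, hα1⟩ := hα
  obtain ⟨hε0, hε4⟩ := hε
  obtain ⟨hδ0, hδ1⟩ := hδ
  have hQ : Q ∈ rowStochastic ℝ (Fin S) := mem_rowStochastic_iff_sum.2 ⟨hQnonneg, hQrow⟩
  have hv' := one_sub_smul_mulVec_eq_of_eq_inv_mulVec hQ hα0.le hα1 hv
  have hSδ : 1 < 2 * S / δ := by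
    rw [one_lt_div hδ0]
    linarith [(Nat.one_le_cast.2 hS : (1 : ℝ) ≤ S)]
  set t := ε * (1 - α) / α
  have hlog := log_le_of_sample_size (by linarith) hα0 hα1 hε0 hε4 hn
  have hn0 : 0 < n := Nat.pos_of_ne_zero fun h0 => by
    simp only [h0, CharP.cast_eq_zero, mul_zero, zero_mul, zero_div] at hlog
    linarith [log_pos hSδ]
  have : Nonempty (Fin n) := ⟨⟨0, hn0⟩⟩
  have hsub : {ω | ε ≤ ‖vtilde ω - v‖} ⊆
      ⋃ s, {ω | Fintype.card (Fin n) * t ≤ |∑ i, (v (Y s i ω) - (Q *ᵥ v) s)|} := fun ω hω => by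
    have hQt : Qtilde ω = empiricalMatrix (fun s i => Y s i ω) := by
      ext s s'
      simp [hQtilde, empiricalMatrix]
    have hvt := one_sub_smul_mulVec_eq_of_eq_inv_mulVec (empiricalMatrix_mem_rowStochastic _)
      hα0.le hα1 (hQt ▸ hvtilde ω)
    exact Set.mem_iUnion.2 (exists_le_abs_sum_sub_of_le_norm_sub hα0 hα1 hv' hvt hε0 hω)
  have htail (s : Fin S) :=
    measureReal_abs_sum_sub_dotProduct_ge_le (hYindep.precomp (Prod.mk_right_injective s) :)
      (hYmeas s) (hQnonneg s) (hYdist s)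
      (norm_le_of_one_sub_smul_mulVec_eq hQ hα0.le hα1 hv') (t := t) (by positivity)
  rw [ENNReal.le_ofReal_iff_toReal_le (measure_ne_top _ _) hδ0.le]
  calc Pr.real {ω | ε ≤ ‖vtilde ω - v‖}
      ≤ ∑ s, Pr.real {ω | Fintype.card (Fin n) * t ≤ |∑ i, (v (Y s i ω) - (Q *ᵥ v) s)|} :=
      (measureReal_mono hsub).trans (measureReal_iUnion_fintype_le _)
    _ ≤ ∑ _s : Fin S, 2 * exp (-log (2 * S / δ)) :=
      sum_le_sum fun s _ => (htail s).trans (by simpa using hlog)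
    _ = δ := by
      rw [exp_neg, exp_log (by linarith)]
      simp [field]

/-- Plug-in accuracy guarantee (core of Theorem 1 of the paper).
For row-stochastic `Q`, `α ∈ (0,1)`, nonnegative `c` with `‖c‖_∞ > 0`,
`v = (1-α)(I-αQ)⁻¹ c`, `ε ∈ (0, 4‖c‖_∞)`, `δ ∈ (0,1)`, and i.i.d. samples
`Y_{s,1},…,Y_{s,n} ~ Q(s,·)` (independent across all pairs `(s,i)`), let
`Q̃(s,s') = (1/n) Σ_i 1(Y_{s,i} = s')` and `ṽ = (1-α)(I-αQ̃)⁻¹ c`. If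
`n ≥ (2‖c‖_∞²α²/(ε²(1-α)²)) log((2S/δ)⌈log(4‖c‖_∞/ε)/(1-α)⌉)`, then
`ℙ(‖ṽ - v‖_∞ ≥ ε) ≤ δ`. -/
theorem backward_epe_plugin_accuracy
    (S : ℕ) (hS : 1 ≤ S) (Q : Matrix (Fin S) (Fin S) ℝ)
    (hQnonneg : ∀ i j, 0 ≤ Q i j) (hQrow : ∀ i, ∑ j, Q i j = 1)
    (α : ℝ) (hα : α ∈ Set.Ioo (0 : ℝ) 1)
    (c : Fin S → ℝ) (hc : ∀ s, 0 ≤ c s) (hcpos : 0 < ‖c‖)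
    (v : Fin S → ℝ) (hv : v = (1 - α) • ((1 - α • Q)⁻¹).mulVec c)
    (ε δ : ℝ) (hε : ε ∈ Set.Ioo 0 (4 * ‖c‖)) (hδ : δ ∈ Set.Ioo (0 : ℝ) 1)
    (Ω : Type*) [MeasurableSpace Ω] (Pr : Measure Ω) [IsProbabilityMeasure Pr]
    (n : ℕ) (Y : Fin S → Fin n → Ω → Fin S)
    (hYmeas : ∀ s i, Measurable (Y s i))
    (hYdist : ∀ s i s', Pr {ω | Y s i ω = s'} = ENNReal.ofReal (Q s s'))
    (hYindep : iIndepFun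
      (fun p : Fin S × Fin n => Y p.1 p.2) Pr)
    (Qtilde : Ω → Matrix (Fin S) (Fin S) ℝ)
    (hQtilde : ∀ ω s s',
      Qtilde ω s s' = (∑ i, if Y s i ω = s' then (1 : ℝ) else 0) / n)
    (vtilde : Ω → Fin S → ℝ)
    (hvtilde : ∀ ω, vtilde ω = (1 - α) • ((1 - α • Qtilde ω)⁻¹).mulVec c)
    (hn : (n : ℝ) ≥ 2 * ‖c‖ ^ 2 * α ^ 2 / (ε ^ 2 * (1 - α) ^ 2)
      * Real.log ((2 * S / δ)
          * (⌈Real.log (4 * ‖c‖ / ε) / (1 - α)⌉₊ : ℝ))) :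
    Pr {ω | ε ≤ ‖vtilde ω - v‖} ≤ ENNReal.ofReal δ :=
  backward_epe_plugin_accuracy_general S hS Q hQnonneg hQrow α hα c v hv ε δ hε hδ Ω Pr n Y hYmeas
    hYdist hYindep Qtilde hQtilde vtilde hvtilde hn
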